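/- Let C be a small category with a coverage τ. A presheaf G of sets on Ĉ is a sheaf for the Grothendieck topology on Ĉ generated by the coverage τ̂ of τ-local epimorphisms if and only if for every τ-local epimorphism f : Y → X in Ĉ the diagram G(X) → G(Y) ⇉ G(Y ×_X Y), with first map G(f) and the pair of maps induced by the two projections of the kernel pair of f, is an equalizer of sets. -/

import Mathlib

universe u

open CategoryTheory CategoryTheory.Limits Opposite

/-- A family of morphisms `{fᵢ : cᵢ ⟶ c}` indexed by a (small) set. -/
structure CoverFamily (C : Type u) [CategoryTheory.SmallCategory C] (c : C) : Type (u + 1) where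
  ι : Type u
  obj : ι → C
  map : ∀ i : ι, obj i ⟶ c

/-- A coverage (Grothendieck pretopology) in the sense of the paper:
identity families are coverings, and coverings admit weak pullbacks. -/
structure PaperCoverage (C : Type u) [CategoryTheory.SmallCategory C] : Type (u + 1) where
  covers : ∀ c : C, Set (CoverFamily C c)
  id_mem : ∀ c : C, (⟨PUnit, fun _ => c, fun _ => 𝟙 c⟩ : CoverFamily C c) ∈ covers c
  pullback_compat : ∀ {c c' : C} (g : c' ⟶ c) (fam : CoverFamily C c), fam ∈ covers c →
    ∃ fam' ∈ covers c', ∀ j : fam'.ι, ∃ (i : fam.ι) (h : fam'.obj j ⟶ fam.obj i),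
      h ≫ fam.map i = fam'.map j ≫ g

variable {C : Type u} [SmallCategory C]

/-- A morphism `π : Y ⟶ X` of presheaves is a `τ`-local epimorphism if every
morphism `y(c) ⟶ X` admits local lifts through `π` along some covering family of `c`. -/
def IsLocalEpi (τ : PaperCoverage C) {Y X : Cᵒᵖ ⥤ Type u} (π : Y ⟶ X) : Prop :=
  ∀ (c : C) (φ : yoneda.obj c ⟶ X),
    ∃ fam ∈ τ.covers c, ∀ j : fam.ι,
      ∃ φj : yoneda.obj (fam.obj j) ⟶ Y, φj ≫ π = yoneda.map (fam.map j) ≫ φ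

/-- The Mathlib coverage on `C` associated to a paper-style coverage `τ`:
its covering presieves are the presieves generated by the covering families of `τ`. -/
def PaperCoverage.toCoverage (τ : PaperCoverage C) : Coverage C where
  coverings c := { S | ∃ fam ∈ τ.covers c, S = Presieve.ofArrows fam.obj fam.map }
  pullback := by
    rintro c c' g S ⟨fam, hfam, rfl⟩
    obtain ⟨fam', hfam', H⟩ := τ.pullback_compat g fam hfam
    refine ⟨Presieve.ofArrows fam'.obj fam'.map, ⟨fam', hfam', rfl⟩, ?_⟩
    rintro Z h ⟨j⟩
    obtain ⟨i, k, hk⟩ := H j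
    exact ⟨fam.obj i, k, fam.map i, Presieve.ofArrows.mk i, hk⟩

/-- The Grothendieck topology on `C` generated by the coverage `τ`. -/
def PaperCoverage.topology (τ : PaperCoverage C) : GrothendieckTopology C :=
  τ.toCoverage.toGrothendieck

/-- The coverage `τ̂` on `Ĉ` whose covering families are the singleton families
`{π : Y ⟶ X}` with `π` a τ-local epimorphism. -/
def hatCoverage (τ : PaperCoverage C) : Coverage (Cᵒᵖ ⥤ Type u) where
  coverings X := { S | ∃ (Y : Cᵒᵖ ⥤ Type u) (π : Y ⟶ X),
    IsLocalEpi τ π ∧ S = Presieve.singleton π }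
  pullback := by
    rintro X Z g S ⟨Y, π, hπ, rfl⟩
    have hfst : IsLocalEpi τ (pullback.fst g π) := by
      intro c φ
      obtain ⟨fam, hfam, H⟩ := hπ c (φ ≫ g)
      refine ⟨fam, hfam, fun j => ?_⟩
      obtain ⟨φj, hφj⟩ := H j
      refine ⟨pullback.lift (yoneda.map (fam.map j) ≫ φ) φj ?_, ?_⟩
      · rw [Category.assoc, ← hφj]
      · first | exact pullback.lift_fst _ _ _ | exact limit.lift_π _ _
    refine ⟨Presieve.singleton (pullback.fst g π),
      ⟨pullback g π, pullback.fst g π, hfst, rfl⟩, ?_⟩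
    rintro W h ⟨⟩
    exact ⟨_, pullback.snd g π, π, Presieve.singleton.mk, pullback.condition.symm⟩

/-- The Grothendieck topology on `Ĉ` generated by the coverage `τ̂` of
τ-local epimorphisms. -/
def hatTopology (τ : PaperCoverage C) : GrothendieckTopology (Cᵒᵖ ⥤ Type u) :=
  (hatCoverage τ).toGrothendieck

/-- A presheaf of sets `G` on `Ĉ` is limit-preserving if it sends colimits in `Ĉ` to
limits in `Set`: for every small diagram `D`, the cone obtained by applying `G` to the
colimit cocone of `D` is a limit cone (i.e. the canonical map
`G(colim D) ⟶ lim G(D(j))` is a bijection). -/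
def LimitPreserving (G : (Cᵒᵖ ⥤ Type u)ᵒᵖ ⥤ Type u) : Prop :=
  ∀ (J : Type u) (_ : SmallCategory J) (D : J ⥤ Cᵒᵖ ⥤ Type u),
    Nonempty (IsLimit (G.mapCone (colimit.cocone D).op))

namespace CategoryTheory.Presieve

theorem isSheafFor_singleton_iff_kernelPair {D : Type*} [Category D] {P : Dᵒᵖ ⥤ Type*}
    {Y X : D} (f : Y ⟶ X) [HasPullback f f] :
    IsSheafFor P (singleton f) ↔
      ∀ t : P.obj (op Y), P.map (pullback.fst f f).op t = P.map (pullback.snd f f).op t →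
        ∃! s : P.obj (op X), P.map f.op s = t :=
  Equalizer.Presieve.isSheafFor_singleton_iff_of_hasPullback.trans
    (Types.type_equalizer_iff_unique _ _)

end CategoryTheory.Presieve

/-- A presheaf of sets `G` on `Ĉ` is a sheaf for the Grothendieck
topology generated by the coverage `τ̂` of τ-local epimorphisms if and only if for every
τ-local epimorphism `f : Y ⟶ X` the diagram `G(X) → G(Y) ⇉ G(Y ×_X Y)` is an equalizer
of sets (expressed elementwise by unique gluing against the kernel pair of `f`). -/
theorem isSheaf_hatTopology_iff_descent (τ : PaperCoverage C)
    (G : (Cᵒᵖ ⥤ Type u)ᵒᵖ ⥤ Type u) :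
    Presieve.IsSheaf (hatTopology τ) G ↔
      ∀ {Y X : Cᵒᵖ ⥤ Type u} (f : Y ⟶ X), IsLocalEpi τ f →
        ∀ t : G.obj (Opposite.op Y),
          G.map (pullback.fst f f).op t = G.map (pullback.snd f f).op t →
            ∃! s : G.obj (Opposite.op X), G.map f.op s = t := by
  rw [hatTopology, Presieve.isSheaf_coverage]
  constructor
  · intro H Y X f hf
    exact (Presieve.isSheafFor_singleton_iff_kernelPair f).mp (H _ ⟨Y, f, hf, rfl⟩)
  · rintro H X _ ⟨Y, f, hf, rfl⟩
    exact (Presieve.isSheafFor_singleton_iff_kernelPair f).mpr (H f hf)
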